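/- For the one-variable constant-term functional: if a = ∑_{i=-N}^{N} c_i X^i ∈ C[X, X^{-1}], then the generating function F_a(t) = ∑_{k≥1} Tr(a^k) t^k is algebraic over C(t). (Special case acceptable: a = X + X^{-1}, where F_a(t) = ∑_{k≥1} binomial(2k,k) t^{2k} = 1/sqrt(1-4t^2) - 1 satisfies (1-4t^2)(F+1)^2 = 1.) -/

import Mathlib

/-!
Expanding `(X + X⁻¹)ᵏ` by the binomial theorem, its constant term is `C(2m, m)` for `k = 2m` and
`0` for odd `k`, so `F + 1 = G(t²)` with `G = ∑ C(2m, m) tᵐ`. The recurrence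
`(m + 1) C(2m + 2, m + 1) = 2 (2m + 1) C(2m, m)` says `(1 - 4t) G' = 2G`, hence
`(1 - 4t) G²` has derivative `0` and constant term `1`, so `(1 - 4t) G² = 1`;
substituting `t ↦ t²` gives the claim.
-/

/-- `a = X + X⁻¹` in the Laurent polynomial algebra `ℂ[ℤ]`. -/
noncomputable def lau : AddMonoidAlgebra ℂ ℤ :=
  AddMonoidAlgebra.single (1 : ℤ) (1 : ℂ) + AddMonoidAlgebra.single (-1 : ℤ) (1 : ℂ)

open Finset AddMonoidAlgebra

namespace PowerSeries

variable (R : Type*) [CommRing R]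

noncomputable def centralBinomSeries : R⟦X⟧ :=
  mk fun n => (n.centralBinom : R)

variable {R}

theorem one_sub_four_X_mul_derivative_centralBinomSeries :
    (1 - 4 * X) * d⁄dX R (centralBinomSeries R) = 2 * centralBinomSeries R := by
  ext n
  rw [sub_mul, one_mul, mul_assoc, ← map_ofNat C 4, ← map_ofNat C 2, map_sub, coeff_C_mul,
    coeff_C_mul, coeff_derivative]
  rcases n with _ | n
  · simp [centralBinomSeries, Nat.centralBinom, Nat.choose]
  · rw [coeff_succ_X_mul, coeff_derivative]
    simp only [centralBinomSeries, coeff_mk]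
    have key := congrArg (Nat.cast : ℕ → R) (Nat.succ_mul_centralBinom_succ (n + 1))
    push_cast at key ⊢
    linear_combination key

theorem one_sub_four_X_mul_centralBinomSeries_sq [IsAddTorsionFree R] :
    (1 - 4 * X) * centralBinomSeries R ^ 2 = 1 := by
  refine derivative.ext ?_ ?_
  · have hd : d⁄dX R (1 - 4 * X : R⟦X⟧) = -4 := by simp [← map_ofNat C 4]
    rw [derivative_one, Derivation.leibniz, derivative_pow, hd, smul_eq_mul, smul_eq_mul]
    linear_combination
      (2 * centralBinomSeries R) * one_sub_four_X_mul_derivative_centralBinomSeries (R := R)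
  · simp [centralBinomSeries]

end PowerSeries

theorem lau_pow_eq_sum (k : ℕ) :
    lau ^ k = ∑ i ∈ range (k + 1), single (2 * i - k : ℤ) (k.choose i : ℂ) := by
  rw [lau, add_pow]
  refine sum_congr rfl fun i hi => ?_
  have hik : i ≤ k := Nat.lt_succ_iff.mp (mem_range.mp hi)
  rw [single_pow, single_pow, single_mul_single, natCast_def, single_mul_single, one_pow, one_pow,
    one_mul, one_mul]
  congr 1
  simp only [nsmul_eq_mul, mul_one, mul_neg]
  omega

theorem coeff_zero_lau_pow (k : ℕ) :
    (lau ^ k).coeff 0 = ∑ i ∈ range (k + 1), if 2 * i = k then (k.choose i : ℂ) else 0 := by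
  simp only [lau_pow_eq_sum, coeff_sum, sum_apply', coeff_single, Finsupp.single_apply]
  exact sum_congr rfl fun i _ => if_congr (by omega) rfl rfl

theorem coeff_zero_lau_pow_two_mul (m : ℕ) : (lau ^ (2 * m)).coeff 0 = m.centralBinom := by
  rw [coeff_zero_lau_pow, sum_eq_single_of_mem m (by simp; omega) fun i _ hi => if_neg (by omega),
    if_pos rfl, Nat.centralBinom_eq_two_mul_choose]

theorem coeff_zero_lau_pow_two_mul_add_one (m : ℕ) : (lau ^ (2 * m + 1)).coeff 0 = 0 := by
  rw [coeff_zero_lau_pow]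
  exact sum_eq_zero fun i _ => if_neg (by omega)

open PowerSeries in
theorem mk_coeff_zero_lau_pow :
    mk (fun k => (lau ^ k).coeff 0) = expand 2 two_ne_zero (centralBinomSeries ℂ) := by
  ext n
  rw [coeff_mk, coeff_expand]
  obtain ⟨m, rfl | rfl⟩ := Nat.even_or_odd' n
  · simp [coeff_zero_lau_pow_two_mul, centralBinomSeries]
  · rw [coeff_zero_lau_pow_two_mul_add_one, if_neg (by omega)]

/-- For `a = X + X⁻¹` in the Laurent polynomial ring, the generating series
`F(t) = ∑_{k≥1} Tr(aᵏ)tᵏ` of constant terms is algebraic: it satisfies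
`(1-4t²)(F+1)² = 1` in `ℂ[[t]]`. -/
theorem trace_generating_function_algebraic :
    ∀ F : PowerSeries ℂ,
      F = PowerSeries.mk (fun k => if k = 0 then 0 else (lau ^ k).coeff (0 : ℤ)) →
      (1 - 4 * PowerSeries.X ^ 2) * (F + 1) ^ 2 = 1 := by
  intro F hF
  have hF1 : F + 1 = PowerSeries.mk fun k => (lau ^ k).coeff 0 := by
    ext (_ | k) <;> simp [hF]
  have hsubst : (1 - 4 * PowerSeries.X ^ 2 : PowerSeries ℂ) =
      PowerSeries.expand 2 two_ne_zero (1 - 4 * PowerSeries.X) := by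
    rw [map_sub, map_one, map_mul, map_ofNat, PowerSeries.expand_X]
  rw [hF1, mk_coeff_zero_lau_pow, hsubst, ← map_pow, ← map_mul,
    PowerSeries.one_sub_four_X_mul_centralBinomSeries_sq, map_one]
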